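/- For every θ ∈ ℝ^q, writing δ(θ) := Φᵀ D (R + γPΦθ − Φθ), the mean-square projected Bellman error satisfies the identity ‖Π(R + γPΦθ) − Φθ‖²_D = δ(θ)ᵀ (Φᵀ D Φ)⁻¹ δ(θ). -/

import Mathlib

/-!
The `D`-orthogonal projection onto the column space of `Φ` is `Π = Φ A⁻¹ Φᵀ D` with the Gram
matrix `A = Φᵀ D Φ`, which is positive definite because `Φ` has full column rank. Since
`Π Φ = Φ`, the projected Bellman residual is `Π(R + γPΦθ) − Φθ = Π(R + γPΦθ − Φθ) = Φ A⁻¹ δ(θ)`,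
and `‖Φ y‖²_D = yᵀ A y`, which for `y = A⁻¹ δ(θ)` is `δ(θ)ᵀ A⁻¹ δ(θ)`.
-/

open Matrix

/-- The `D`-weighted norm `‖x‖_D = √(xᵀ D x)` with `D = diag d`. -/
noncomputable def wNorm {S : Type*} [Fintype S] [DecidableEq S]
    (d : S → ℝ) (x : S → ℝ) : ℝ :=
  Real.sqrt (x ⬝ᵥ (Matrix.diagonal d *ᵥ x))

theorem wNorm_sq {S : Type*} [Fintype S] [DecidableEq S] {d : S → ℝ} (hd : ∀ s, 0 ≤ d s)
    (x : S → ℝ) : wNorm d x ^ 2 = x ⬝ᵥ (diagonal d *ᵥ x) :=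
  Real.sq_sqrt ((PosSemidef.diagonal fun s => hd s).dotProduct_mulVec_nonneg x)

namespace Matrix

theorem mulVec_injective_of_rank_eq_card {m n K : Type*} [Fintype n] [Field K] {A : Matrix m n K}
    (hA : A.rank = Fintype.card n) : Function.Injective A.mulVec := by
  rw [mulVec_injective_iff, linearIndependent_iff_card_eq_finrank_span, Set.finrank,
    ← rank_eq_finrank_span_cols, hA]

variable {m n : Type*} [Fintype m] [Fintype n]

theorem posDef_transpose_mul_diagonal_mul [DecidableEq m] {d : m → ℝ} (hd : ∀ s, 0 < d s)
    {Φ : Matrix m n ℝ} (hΦ : Function.Injective Φ.mulVec) : (Φᵀ * diagonal d * Φ).PosDef := by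
  simpa only [conjTranspose_eq_transpose_of_trivial] using
    (PosDef.diagonal hd).conjTranspose_mul_mul_same hΦ

theorem mulVec_dotProduct_mulVec_mulVec {R : Type*} [CommRing R] (W : Matrix m m R)
    (Φ : Matrix m n R) (y : n → R) :
    (Φ *ᵥ y) ⬝ᵥ (W *ᵥ (Φ *ᵥ y)) = y ⬝ᵥ ((Φᵀ * W * Φ) *ᵥ y) := by
  rw [← mulVec_mulVec, ← mulVec_mulVec, dotProduct_mulVec y Φᵀ, vecMul_transpose]

section WeightedProjection

variable {R : Type*} [CommRing R] [DecidableEq n]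

/-- The `W`-orthogonal projection onto the column space of `Φ` (the paper's `Π` for `W = D`). -/
noncomputable def weightedProj (Φ : Matrix m n R) (W : Matrix m m R) : Matrix m m R :=
  Φ * (Φᵀ * W * Φ)⁻¹ * Φᵀ * W

theorem weightedProj_mulVec_sub_mulVec {Φ : Matrix m n R} {W : Matrix m m R}
    (hA : IsUnit (Φᵀ * W * Φ).det) (v : m → R) (θ : n → R) :
    weightedProj Φ W *ᵥ v - Φ *ᵥ θ = Φ *ᵥ ((Φᵀ * W * Φ)⁻¹ *ᵥ ((Φᵀ * W) *ᵥ (v - Φ *ᵥ θ))) := by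
  have hfix : Φ * (Φᵀ * W * Φ)⁻¹ * (Φᵀ * W) * Φ = Φ := by
    rw [Matrix.mul_assoc _ (Φᵀ * W), Matrix.mul_assoc Φ, nonsing_inv_mul _ hA, Matrix.mul_one]
  rw [mulVec_mulVec, mulVec_mulVec, mulVec_sub, mulVec_mulVec θ, hfix, weightedProj,
    Matrix.mul_assoc (Φ * _)]

end WeightedProjection

end Matrix

theorem stmt_11_general {S : Type*} [Fintype S] [DecidableEq S]
    (q : ℕ)
    (P : Matrix S S ℝ) (γ : ℝ) (R : S → ℝ)
    (d : S → ℝ) (hd : ∀ s, 0 < d s)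
    (Φ : Matrix S (Fin q) ℝ) (hΦ : Φ.rank = q)
    (Proj : Matrix S S ℝ)
    (hProj : Proj = Φ * (Φᵀ * Matrix.diagonal d * Φ)⁻¹ * Φᵀ * Matrix.diagonal d)
    (δ : (Fin q → ℝ) → (Fin q → ℝ))
    (hδ : ∀ θ, δ θ =
      (Φᵀ * Matrix.diagonal d) *ᵥ (R + γ • (P *ᵥ (Φ *ᵥ θ)) - Φ *ᵥ θ)) :
    ∀ θ : Fin q → ℝ,
      wNorm d (Proj *ᵥ (R + γ • (P *ᵥ (Φ *ᵥ θ))) - Φ *ᵥ θ) ^ 2 =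
        δ θ ⬝ᵥ ((Φᵀ * Matrix.diagonal d * Φ)⁻¹ *ᵥ δ θ) := by
  intro θ
  have hinj : Function.Injective Φ.mulVec :=
    mulVec_injective_of_rank_eq_card (by rw [hΦ, Fintype.card_fin])
  have hA : IsUnit (Φᵀ * diagonal d * Φ).det :=
    (isUnit_iff_isUnit_det _).mp (posDef_transpose_mul_diagonal_mul hd hinj).isUnit
  have hProj' : Proj = weightedProj Φ (diagonal d) := hProj
  rw [hProj', weightedProj_mulVec_sub_mulVec hA, ← hδ, wNorm_sq fun s => (hd s).le,
    mulVec_dotProduct_mulVec_mulVec, mulVec_mulVec, mul_nonsing_inv _ hA, one_mulVec,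
    dotProduct_comm]

/-- With `δ(θ) = Φᵀ D (R + γPΦθ − Φθ)`, the mean-square projected Bellman error
satisfies `‖Π(R + γPΦθ) − Φθ‖²_D = δ(θ)ᵀ (Φᵀ D Φ)⁻¹ δ(θ)`. -/
theorem stmt_11 {S : Type*} [Fintype S] [DecidableEq S] [Nonempty S]
    (q : ℕ) (hq : 0 < q)
    (P : Matrix S S ℝ) (γ : ℝ) (R : S → ℝ)
    (d : S → ℝ) (hd : ∀ s, 0 < d s)
    (Φ : Matrix S (Fin q) ℝ) (hΦ : Φ.rank = q)
    (Proj : Matrix S S ℝ)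
    (hProj : Proj = Φ * (Φᵀ * Matrix.diagonal d * Φ)⁻¹ * Φᵀ * Matrix.diagonal d)
    (δ : (Fin q → ℝ) → (Fin q → ℝ))
    (hδ : ∀ θ, δ θ =
      (Φᵀ * Matrix.diagonal d) *ᵥ (R + γ • (P *ᵥ (Φ *ᵥ θ)) - Φ *ᵥ θ)) :
    ∀ θ : Fin q → ℝ,
      wNorm d (Proj *ᵥ (R + γ • (P *ᵥ (Φ *ᵥ θ))) - Φ *ᵥ θ) ^ 2 =
        δ θ ⬝ᵥ ((Φᵀ * Matrix.diagonal d * Φ)⁻¹ *ᵥ δ θ) :=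
  stmt_11_general q P γ R d hd Φ hΦ Proj hProj δ hδ
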